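/- Let q ≥ 1 be an integer and let (s_j)_{j=0}^∞ be a Stieltjes positive definite sequence of complex q×q matrices. Then for all k, n ∈ ℕ₀ and all z ∈ ℂ: 𝒬_{2n}(z) · 𝕃_k^{(2n+1)} = 𝕄_{k+n+1}(z) · 𝒬_{2n}(z), 𝒬_{2n}(z) · 𝕄_k^{(2n+1)}(z) = 𝕃_{k+n} · 𝒬_{2n}(z), 𝒬_{2n+1}(z) · 𝕃_k^{(2n+2)} = 𝕃_{k+n+1} · 𝒬_{2n+1}(z), and 𝒬_{2n+1}(z) · 𝕄_k^{(2n+2)}(z) = 𝕄_{k+n+1}(z) · 𝒬_{2n+1}(z). -/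

import Mathlib

open Matrix
open scoped ComplexOrder

noncomputable section

/-- The space of complex `q × q` matrices. -/
abbrev Mq (q : ℕ) := Matrix (Fin q) (Fin q) ℂ

/-- The space of complex `2q × 2q` matrices, written in `q × q` blocks. -/
abbrev M2q (q : ℕ) := Matrix (Fin q ⊕ Fin q) (Fin q ⊕ Fin q) ℂ

/-- Block Hankel matrix `H_n = (s_{j+k})_{j,k=0}^n`. -/
def Hmat (q : ℕ) (s : ℕ → Mq q) (n : ℕ) :
    Matrix (Fin (n + 1) × Fin q) (Fin (n + 1) × Fin q) ℂ :=
  Matrix.of fun p r => s (p.1.1 + r.1.1) p.2 r.2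

/-- Block Hankel matrix `K_n = (s_{j+k+1})_{j,k=0}^n`. -/
def Kmat (q : ℕ) (s : ℕ → Mq q) (n : ℕ) :
    Matrix (Fin (n + 1) × Fin q) (Fin (n + 1) × Fin q) ℂ :=
  Matrix.of fun p r => s (p.1.1 + r.1.1 + 1) p.2 r.2

/-- A sequence of complex `q × q` matrices is Stieltjes positive definite if all the
block Hankel matrices `H_n` and `K_n` are positive definite (in particular Hermitian). -/
def IsStieltjesPD (q : ℕ) (s : ℕ → Mq q) : Prop :=
  ∀ n : ℕ, (Hmat q s n).PosDef ∧ (Kmat q s n).PosDef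

/-- Even Stieltjes parameters `𝔮_{2k}` (Schur complements `L_k`). -/
def qEven (q : ℕ) (s : ℕ → Mq q) : ℕ → Mq q
  | 0 => s 0
  | k + 1 =>
      s (2 * (k + 1)) -
        (Matrix.of fun (a : Fin q) (r : Fin (k + 1) × Fin q) => s (k + 1 + r.1.1) a r.2) *
          (Hmat q s k)⁻¹ *
          (Matrix.of fun (p : Fin (k + 1) × Fin q) (b : Fin q) => s (k + 1 + p.1.1) p.2 b)

/-- Odd Stieltjes parameters `𝔮_{2k+1}` (Schur complements `Λ_k`). -/
def qOdd (q : ℕ) (s : ℕ → Mq q) : ℕ → Mq q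
  | 0 => s 1
  | k + 1 =>
      s (2 * (k + 1) + 1) -
        (Matrix.of fun (a : Fin q) (r : Fin (k + 1) × Fin q) => s (k + 2 + r.1.1) a r.2) *
          (Kmat q s k)⁻¹ *
          (Matrix.of fun (p : Fin (k + 1) × Fin q) (b : Fin q) => s (k + 2 + p.1.1) p.2 b)

/-- Stieltjes parametrization `𝔮_j`. -/
def qpar (q : ℕ) (s : ℕ → Mq q) (j : ℕ) : Mq q :=
  if j % 2 = 0 then qEven q s (j / 2) else qOdd q s (j / 2)

/-- Reciprocal sequence `s^♯`. -/
def reciprocal (q : ℕ) (s : ℕ → Mq q) : ℕ → Mq q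
  | 0 => (s 0)⁻¹
  | j + 1 =>
      -(s 0)⁻¹ *
        ∑ l ∈ (Finset.range (j + 1)).attach, s (j + 1 - l.1) * reciprocal q s l.1
  decreasing_by exact Finset.mem_range.mp l.2

/-- First Kátětov transform `s^{(1)}_j = −s_0 s_{j+1}^♯ s_0`. -/
def katetov1 (q : ℕ) (s : ℕ → Mq q) : ℕ → Mq q :=
  fun j => -(s 0) * reciprocal q s (j + 1) * s 0

/-- `ℓ`-th Kátětov transform (the `ℓ`-fold iterate of the first Kátětov transform). -/
def katetov (q : ℕ) (ℓ : ℕ) (s : ℕ → Mq q) : ℕ → Mq q :=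
  (katetov1 q)^[ℓ] s

/-- `v_k = col(I_q, 0_{kq×q})`. -/
def vcol (q k : ℕ) : Matrix (Fin (k + 1) × Fin q) (Fin q) ℂ :=
  Matrix.of fun p b => if p.1.1 = 0 ∧ p.2 = b then 1 else 0

/-- `y_{0,k} = col(s_0, …, s_k)`. -/
def ycol (q : ℕ) (s : ℕ → Mq q) (k : ℕ) : Matrix (Fin (k + 1) × Fin q) (Fin q) ℂ :=
  Matrix.of fun p b => s p.1.1 p.2 b

/-- Dyukarev–Stieltjes parameters `𝔐_k`. -/
def DSM (q : ℕ) (s : ℕ → Mq q) : ℕ → Mq q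
  | 0 => (s 0)⁻¹
  | k + 1 =>
      (vcol q (k + 1))ᴴ * (Hmat q s (k + 1))⁻¹ * vcol q (k + 1) -
        (vcol q k)ᴴ * (Hmat q s k)⁻¹ * vcol q k

/-- Dyukarev–Stieltjes parameters `𝔏_k`. -/
def DSL (q : ℕ) (s : ℕ → Mq q) : ℕ → Mq q
  | 0 => s 0 * (s 1)⁻¹ * s 0
  | k + 1 =>
      (ycol q s (k + 1))ᴴ * (Kmat q s (k + 1))⁻¹ * ycol q s (k + 1) -
        (ycol q s k)ᴴ * (Kmat q s k)⁻¹ * ycol q s k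

/-- Ordered product `A_0 A_1 ⋯ A_n`. -/
def oprod {α : Type*} [Monoid α] (f : ℕ → α) (n : ℕ) : α :=
  ((List.range (n + 1)).map f).prod

/-- Block shift `T_n = (δ_{j,k+1} I_q)_{j,k=0}^n`. -/
def Tmat (q n : ℕ) : Matrix (Fin (n + 1) × Fin q) (Fin (n + 1) × Fin q) ℂ :=
  Matrix.of fun p r => if p.1.1 = r.1.1 + 1 ∧ p.2 = r.2 then 1 else 0

/-- `R_n(z) = (I_{(n+1)q} − z T_n)⁻¹`. -/
def Rmat (q n : ℕ) (z : ℂ) : Matrix (Fin (n + 1) × Fin q) (Fin (n + 1) × Fin q) ℂ :=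
  (1 - z • Tmat q n)⁻¹

/-- `u_0 = 0`, `u_n = col(0_{q×q}, −y_{0,n−1})`. -/
def ucol (q : ℕ) (s : ℕ → Mq q) (n : ℕ) : Matrix (Fin (n + 1) × Fin q) (Fin q) ℂ :=
  Matrix.of fun p b => if p.1.1 = 0 then 0 else -(s (p.1.1 - 1) p.2 b)

/-- `col(−H_n⁻¹ y_{n+1,2n+1}, I_q)` of size `(n+2)q × q`. -/
def colH (q : ℕ) (s : ℕ → Mq q) (n : ℕ) : Matrix (Fin (n + 2) × Fin q) (Fin q) ℂ :=
  Matrix.of fun p b =>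
    if h : p.1.1 < n + 1 then
      (-((Hmat q s n)⁻¹ *
          Matrix.of fun (r : Fin (n + 1) × Fin q) (c : Fin q) => s (n + 1 + r.1.1) r.2 c))
        (⟨p.1.1, h⟩, p.2) b
    else if p.2 = b then 1 else 0

/-- `col(−K_n⁻¹ y_{n+2,2n+2}, I_q)` of size `(n+2)q × q`. -/
def colK (q : ℕ) (s : ℕ → Mq q) (n : ℕ) : Matrix (Fin (n + 2) × Fin q) (Fin q) ℂ :=
  Matrix.of fun p b =>
    if h : p.1.1 < n + 1 then
      (-((Kmat q s n)⁻¹ *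
          Matrix.of fun (r : Fin (n + 1) × Fin q) (c : Fin q) => s (n + 2 + r.1.1) r.2 c))
        (⟨p.1.1, h⟩, p.2) b
    else if p.2 = b then 1 else 0

/-- `z_{0,n} = row(s_0, …, s_n)`. -/
def zrow (q : ℕ) (s : ℕ → Mq q) (n : ℕ) : Matrix (Fin q) (Fin (n + 1) × Fin q) ℂ :=
  Matrix.of fun a r => s r.1.1 a r.2

/-- Orthogonal matrix polynomials `P_n`. -/
def Ppoly (q : ℕ) (s : ℕ → Mq q) : ℕ → ℂ → Mq q
  | 0, _ => 1
  | n + 1, z => (vcol q (n + 1))ᴴ * (Rmat q (n + 1) (starRingEnd ℂ z))ᴴ * colH q s n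

/-- Second kind matrix polynomials `Q_n`. -/
def Qpoly (q : ℕ) (s : ℕ → Mq q) : ℕ → ℂ → Mq q
  | 0, _ => 0
  | n + 1, z => -((ucol q s (n + 1))ᴴ * (Rmat q (n + 1) (starRingEnd ℂ z))ᴴ * colH q s n)

/-- Matrix polynomials `P̂_n`. -/
def Phat (q : ℕ) (s : ℕ → Mq q) : ℕ → ℂ → Mq q
  | 0, _ => 1
  | n + 1, z => (vcol q (n + 1))ᴴ * (Rmat q (n + 1) (starRingEnd ℂ z))ᴴ * colK q s n

/-- Matrix polynomials `Q̂_n`. -/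
def Qhat (q : ℕ) (s : ℕ → Mq q) : ℕ → ℂ → Mq q
  | 0, _ => s 0
  | n + 1, z => zrow q s (n + 1) * (Rmat q (n + 1) (starRingEnd ℂ z))ᴴ * colK q s n

/-- `α_n(z)`. -/
def alphaP (q : ℕ) (s : ℕ → Mq q) (n : ℕ) (z : ℂ) : Mq q :=
  1 - z • ((ucol q s n)ᴴ * (Rmat q n (starRingEnd ℂ z))ᴴ * (Hmat q s n)⁻¹ * vcol q n)

/-- `γ_n(z)`. -/
def gammaP (q : ℕ) (s : ℕ → Mq q) (n : ℕ) (z : ℂ) : Mq q :=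
  -(z • ((vcol q n)ᴴ * (Rmat q n (starRingEnd ℂ z))ᴴ * (Hmat q s n)⁻¹ * vcol q n))

/-- `β_n(z)`. -/
def betaP (q : ℕ) (s : ℕ → Mq q) : ℕ → ℂ → Mq q
  | 0, _ => 0
  | n + 1, z => (ycol q s n)ᴴ * (Rmat q n (starRingEnd ℂ z))ᴴ * (Kmat q s n)⁻¹ * ycol q s n

/-- `δ_n(z)`. -/
def deltaP (q : ℕ) (s : ℕ → Mq q) : ℕ → ℂ → Mq q
  | 0, _ => 1
  | n + 1, z =>
      1 + z • ((vcol q n)ᴴ * (Rmat q n (starRingEnd ℂ z))ᴴ * (Kmat q s n)⁻¹ * ycol q s n)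

/-- The resolvent matrices `U_m(z)`. -/
def Umat (q : ℕ) (s : ℕ → Mq q) (m : ℕ) (z : ℂ) : M2q q :=
  if m % 2 = 0 then
    Matrix.fromBlocks (alphaP q s (m / 2) z) (betaP q s (m / 2) z)
      (gammaP q s (m / 2) z) (deltaP q s (m / 2) z)
  else
    Matrix.fromBlocks (alphaP q s (m / 2) z) (betaP q s (m / 2 + 1) z)
      (gammaP q s (m / 2) z) (deltaP q s (m / 2 + 1) z)

/-- `𝕄_k(z) = [[I, 0], [−z𝔐_k, I]]`. -/
def MM (q : ℕ) (s : ℕ → Mq q) (k : ℕ) (z : ℂ) : M2q q :=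
  Matrix.fromBlocks 1 0 (-(z • DSM q s k)) 1

/-- `𝕃_k = [[I, 𝔏_k], [0, I]]`. -/
def LL (q : ℕ) (s : ℕ → Mq q) (k : ℕ) : M2q q :=
  Matrix.fromBlocks 1 (DSL q s k) 0 1

/-- `𝒫_n = diag([P_n(0)]^{−*}, P_n(0))`. -/
def PPmat (q : ℕ) (s : ℕ → Mq q) (n : ℕ) : M2q q :=
  Matrix.fromBlocks (((Ppoly q s n 0)⁻¹)ᴴ) 0 0 (Ppoly q s n 0)

/-- `𝐐_n(z) = [[0, Q̂_n(0)], [−z[Q̂_n(0)]^{−*}, 0]]`. -/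
def QQgen (q : ℕ) (s : ℕ → Mq q) (n : ℕ) (z : ℂ) : M2q q :=
  Matrix.fromBlocks 0 (Qhat q s n 0) (-(z • ((Qhat q s n 0)⁻¹)ᴴ)) 0

/-- `𝐐_0^{(ℓ)}(z) = [[0, s_0^{(ℓ)}], [−z(s_0^{(ℓ)})⁻¹, 0]]`. -/
def QQ0 (q : ℕ) (s : ℕ → Mq q) (ℓ : ℕ) (z : ℂ) : M2q q :=
  Matrix.fromBlocks 0 (katetov q ℓ s 0) (-(z • (katetov q ℓ s 0)⁻¹)) 0

/-- `𝒬_m(z) = 𝐐_0^{(0)}(z) ⋯ 𝐐_0^{(m)}(z)`. -/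
def Qprod (q : ℕ) (s : ℕ → Mq q) (m : ℕ) (z : ℂ) : M2q q :=
  oprod (fun ℓ => QQ0 q s ℓ z) m

/-!
The first Kátětov transform `t` of `s` is governed by the block lower-triangular Toeplitz matrix
`A_n` with blocks `s₀ s^♯_m`, whose inverse has blocks `s_m s₀⁻¹`. The convolution identities of the
reciprocal sequence give `H_n(t) = A_n K_n(s) A_n^*`, `K_n(t) = A_n Σ_n A_n^*`, where `Σ_n` is the
Schur complement of `s₀` in `H_{n+1}(s)`, and `y_{0,n}(t) = A_n col(s₁, …, s_{n+1})`. Hence `t` is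
again Stieltjes positive definite, and, reading off the corner of `H_{n+1}⁻¹` from the block
inverse formula, `𝔏_k = s₀ 𝔐_k^{(1)} s₀` and `𝔏_k^{(1)} = s₀ 𝔐_{k+1} s₀`. These two identities say
that `𝐐_0` intertwines `𝕄_k^{(1)}` with `𝕃_k` and `𝕃_k^{(1)}` with `𝕄_{k+1}`; applying this to
every Kátětov transform and chaining along the product `𝒬_m` gives the four relations.
-/

open Finset

lemma Finset.sum_range_ite_le {M : Type*} [AddCommMonoid M] {n j : ℕ} (hj : j ≤ n) (F : ℕ → M) :
    ∑ a ∈ range (n + 1), (if a ≤ j then F a else 0) = ∑ a ∈ range (j + 1), F a := by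
  rw [← sum_filter]
  congr 1
  ext a
  simp only [mem_filter, mem_range]
  omega

lemma Finset.sum_range_succ_reflect_mul {R : Type*} [NonUnitalNonAssocSemiring R] (f g : ℕ → R)
    (m : ℕ) :
    ∑ l ∈ range (m + 1), f (m - l) * g l = ∑ l ∈ range (m + 1), f l * g (m - l) := by
  rw [← sum_range_reflect]
  refine sum_congr rfl fun l hl => ?_
  have := mem_range.mp hl
  rw [show m + 1 - 1 - l = m - l by omega, show m - (m - l) = l by omega]

section BlockMatrices

variable {ι R : Type*}

def blockMat (W : ℕ → ℕ → Matrix ι ι R) (n : ℕ) : Matrix (Fin (n + 1) × ι) (Fin (n + 1) × ι) R :=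
  Matrix.of fun p r => W p.1 r.1 p.2 r.2

def blockCol (c : ℕ → Matrix ι ι R) (n : ℕ) : Matrix (Fin (n + 1) × ι) ι R :=
  Matrix.of fun p b => c p.1 p.2 b

def blockRow (c : ℕ → Matrix ι ι R) (n : ℕ) : Matrix ι (Fin (n + 1) × ι) R :=
  Matrix.of fun a p => c p.1 a p.2

def blockToeplitz [Zero R] (f : ℕ → Matrix ι ι R) (n : ℕ) :
    Matrix (Fin (n + 1) × ι) (Fin (n + 1) × ι) R :=
  blockMat (fun j k => if k ≤ j then f (j - k) else 0) n

lemma blockMat_congr {W W' : ℕ → ℕ → Matrix ι ι R} {n : ℕ}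
    (h : ∀ j k, j ≤ n → k ≤ n → W j k = W' j k) : blockMat W n = blockMat W' n := by
  ext ⟨j, a⟩ ⟨k, b⟩
  simp only [blockMat, Matrix.of_apply, h j k (Nat.le_of_lt_succ j.2) (Nat.le_of_lt_succ k.2)]

lemma blockCol_congr {c c' : ℕ → Matrix ι ι R} {n : ℕ} (h : ∀ j, j ≤ n → c j = c' j) :
    blockCol c n = blockCol c' n := by
  ext ⟨j, a⟩ b
  simp only [blockCol, Matrix.of_apply, h j (Nat.le_of_lt_succ j.2)]

lemma blockToeplitz_congr [Zero R] {f f' : ℕ → Matrix ι ι R} {n : ℕ} (h : ∀ m, m ≤ n → f m = f' m) :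
    blockToeplitz f n = blockToeplitz f' n :=
  blockMat_congr fun j k hj _ => by split_ifs <;> simp only [h (j - k) (by omega)]

lemma blockToeplitz_apply_eq_of_eq [Zero R] {f f' : ℕ → Matrix ι ι R} {n : ℕ}
    (h : blockToeplitz f n = blockToeplitz f' n) {m : ℕ} (hm : m ≤ n) : f m = f' m := by
  ext a b
  simpa [blockToeplitz, blockMat] using congrFun (congrFun h (⟨m, by omega⟩, a)) (0, b)

section Mul

variable [Fintype ι] [NonUnitalNonAssocSemiring R]

lemma blockMat_mul_blockMat (W V : ℕ → ℕ → Matrix ι ι R) (n : ℕ) :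
    blockMat W n * blockMat V n = blockMat (fun j k => ∑ a ∈ range (n + 1), W j a * V a k) n := by
  ext ⟨j, a⟩ ⟨k, b⟩
  simp only [blockMat, Matrix.mul_apply, Matrix.of_apply, Fintype.sum_prod_type, Matrix.sum_apply]
  exact Fin.sum_univ_eq_sum_range (fun c => ∑ y, W j c a y * V c k y b) (n + 1)

lemma blockMat_mul_blockCol (W : ℕ → ℕ → Matrix ι ι R) (c : ℕ → Matrix ι ι R) (n : ℕ) :
    blockMat W n * blockCol c n = blockCol (fun j => ∑ a ∈ range (n + 1), W j a * c a) n := by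
  ext ⟨j, a⟩ b
  simp only [blockMat, blockCol, Matrix.mul_apply, Matrix.of_apply, Fintype.sum_prod_type,
    Matrix.sum_apply]
  exact Fin.sum_univ_eq_sum_range (fun i => ∑ y, W j i a y * c i y b) (n + 1)

lemma blockCol_mul_blockRow (c d : ℕ → Matrix ι ι R) (n : ℕ) :
    blockCol c n * blockRow d n = blockMat (fun j k => c j * d k) n := rfl

lemma blockCol_mul (c : ℕ → Matrix ι ι R) (n : ℕ) (T : Matrix ι ι R) :
    blockCol c n * T = blockCol (fun m => c m * T) n := rfl

end Mul

lemma conjTranspose_blockMat [Star R] (W : ℕ → ℕ → Matrix ι ι R) (n : ℕ) :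
    (blockMat W n)ᴴ = blockMat (fun j k => (W k j)ᴴ) n := rfl

lemma conjTranspose_blockCol [Star R] (c : ℕ → Matrix ι ι R) (n : ℕ) :
    (blockCol c n)ᴴ = blockRow (fun m => (c m)ᴴ) n := rfl

lemma conjTranspose_blockRow [Star R] (c : ℕ → Matrix ι ι R) (n : ℕ) :
    (blockRow c n)ᴴ = blockCol (fun m => (c m)ᴴ) n := rfl

section Toeplitz

variable [Fintype ι] [DecidableEq ι] [Semiring R]

lemma blockToeplitz_mul_blockMat (f : ℕ → Matrix ι ι R) (W : ℕ → ℕ → Matrix ι ι R) (n : ℕ) :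
    blockToeplitz f n * blockMat W n =
      blockMat (fun j k => ∑ a ∈ range (j + 1), f (j - a) * W a k) n := by
  rw [blockToeplitz, blockMat_mul_blockMat]
  refine blockMat_congr fun j k hj _ => ?_
  simp only [ite_mul, zero_mul]
  exact sum_range_ite_le hj _

lemma blockToeplitz_mul_blockCol (f c : ℕ → Matrix ι ι R) (n : ℕ) :
    blockToeplitz f n * blockCol c n =
      blockCol (fun j => ∑ a ∈ range (j + 1), f (j - a) * c a) n := by
  rw [blockToeplitz, blockMat_mul_blockCol]
  refine blockCol_congr fun j hj => ?_
  simp only [ite_mul, zero_mul]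
  exact sum_range_ite_le hj _

lemma blockToeplitz_mul_blockCol_single_zero (f : ℕ → Matrix ι ι R) (n : ℕ) :
    blockToeplitz f n * blockCol (fun m => if m = 0 then (1 : Matrix ι ι R) else 0) n =
      blockCol f n := by
  rw [blockToeplitz_mul_blockCol]
  refine blockCol_congr fun j _ => ?_
  simp [mul_ite]

lemma blockToeplitz_mul_blockToeplitz (f g : ℕ → Matrix ι ι R) (n : ℕ) :
    blockToeplitz f n * blockToeplitz g n =
      blockToeplitz (fun m => ∑ l ∈ range (m + 1), f (m - l) * g l) n := by
  rw [show blockToeplitz g n = blockMat _ n from rfl, blockToeplitz_mul_blockMat]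
  refine blockMat_congr fun j k _ _ => ?_
  split_ifs with hkj
  · obtain ⟨m, rfl⟩ := Nat.exists_eq_add_of_le hkj
    rw [Nat.add_sub_cancel_left, show k + m + 1 = k + (m + 1) from rfl, sum_range_add,
      sum_eq_zero, zero_add]
    · refine sum_congr rfl fun l _ => ?_
      simp [Nat.add_sub_add_left]
    · intro a ha
      simp [(mem_range.mp ha).not_ge]
  · refine sum_eq_zero fun a ha => ?_
    simp [show ¬k ≤ a by have := mem_range.mp ha; omega]

omit [Fintype ι] in
lemma blockToeplitz_single_zero (n : ℕ) :
    blockToeplitz (fun m => if m = 0 then (1 : Matrix ι ι R) else 0) n = 1 := by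
  ext ⟨j, a⟩ ⟨k, b⟩
  simp only [blockToeplitz, blockMat, Matrix.of_apply, Matrix.one_apply, Prod.mk.injEq, Fin.ext_iff]
  rcases lt_trichotomy (j : ℕ) k with h | h | h
  · simp [h.not_ge, h.ne]
  · simp [h, Matrix.one_apply]
  · simp [h.le, Nat.sub_ne_zero_of_lt h, h.ne']

lemma blockToeplitz_mul_blockMat_mul_conjTranspose_blockToeplitz [StarRing R]
    (f g : ℕ → Matrix ι ι R) (W : ℕ → ℕ → Matrix ι ι R) (n : ℕ) :
    blockToeplitz f n * blockMat W n * (blockToeplitz g n)ᴴ = blockMat (fun j k =>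
      ∑ a ∈ range (j + 1), ∑ b ∈ range (k + 1), f (j - a) * W a b * (g (k - b))ᴴ) n := by
  rw [blockToeplitz_mul_blockMat, blockToeplitz, conjTranspose_blockMat, blockMat_mul_blockMat]
  refine blockMat_congr fun j k _ hk => ?_
  simp only [apply_ite, Matrix.conjTranspose_zero, mul_zero, sum_mul]
  rw [sum_comm, sum_range_ite_le hk]

end Toeplitz

end BlockMatrices

lemma Matrix.inv_mul_mul_conjTranspose {n 𝕜 : Type*} [Fintype n] [DecidableEq n] [CommRing 𝕜]
    [StarRing 𝕜] {A B : Matrix n n 𝕜} (h : A * B = 1) (M : Matrix n n 𝕜) :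
    (A * M * Aᴴ)⁻¹ = Bᴴ * M⁻¹ * B := by
  rw [Matrix.mul_inv_rev, Matrix.mul_inv_rev, ← Matrix.conjTranspose_nonsing_inv,
    Matrix.inv_eq_right_inv h, Matrix.mul_assoc]

lemma semiconjBy_fromBlocks_upper {n R : Type*} [Fintype n] [DecidableEq n] [CommRing R]
    {a L M : Matrix n n R} (ha : IsUnit a.det) (h : L = a * M * a) (z : R) :
    SemiconjBy (Matrix.fromBlocks 0 a (-(z • a⁻¹)) 0) (Matrix.fromBlocks 1 L 0 1)
      (Matrix.fromBlocks 1 0 (-(z • M)) 1) := by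
  have key : a⁻¹ * L = M * a := by
    rw [h, Matrix.mul_assoc, Matrix.nonsing_inv_mul_cancel_left _ _ ha]
  simp [SemiconjBy, Matrix.fromBlocks_multiply, key]

lemma semiconjBy_fromBlocks_lower {n R : Type*} [Fintype n] [DecidableEq n] [CommRing R]
    {a L M : Matrix n n R} (ha : IsUnit a.det) (h : L = a * M * a) (z : R) :
    SemiconjBy (Matrix.fromBlocks 0 a (-(z • a⁻¹)) 0) (Matrix.fromBlocks 1 0 (-(z • M)) 1)
      (Matrix.fromBlocks 1 L 0 1) := by
  have key : a * M = L * a⁻¹ := by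
    rw [h, Matrix.mul_nonsing_inv_cancel_right _ _ ha]
  simp [SemiconjBy, Matrix.fromBlocks_multiply, key]

lemma oprod_zero {α : Type*} [Monoid α] (f : ℕ → α) : oprod f 0 = f 0 := by
  simp [oprod]

lemma oprod_succ {α : Type*} [Monoid α] (f : ℕ → α) (n : ℕ) :
    oprod f (n + 1) = oprod f n * f (n + 1) := by
  simp [oprod, List.range_succ, mul_assoc]

def sumSuccProdEquiv (ι : Type*) (n : ℕ) : ι ⊕ (Fin (n + 1) × ι) ≃ Fin (n + 2) × ι where
  toFun := Sum.elim (fun c => (0, c)) (fun r => (r.1.succ, r.2))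
  invFun p := Fin.cases (Sum.inl p.2) (fun i => Sum.inr (i, p.2)) p.1
  left_inv := by rintro (c | ⟨i, c⟩) <;> simp
  right_inv := by
    rintro ⟨j, c⟩
    induction j using Fin.cases <;> simp

section

variable {q : ℕ} {s : ℕ → Mq q}

lemma reciprocal_succ (s : ℕ → Mq q) (j : ℕ) : reciprocal q s (j + 1) =
    -(s 0)⁻¹ * ∑ l ∈ range (j + 1), s (j + 1 - l) * reciprocal q s l := by
  rw [reciprocal, sum_attach (range (j + 1)) fun l => s (j + 1 - l) * reciprocal q s l]

lemma sum_mul_reciprocal (h0 : IsUnit (s 0).det) (m : ℕ) :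
    ∑ l ∈ range (m + 1), s (m - l) * reciprocal q s l = if m = 0 then 1 else 0 := by
  cases m with
  | zero => simp [reciprocal, Matrix.mul_nonsing_inv _ h0]
  | succ j =>
    rw [sum_range_succ, Nat.sub_self, reciprocal_succ, neg_mul, mul_neg, ← Matrix.mul_assoc,
      Matrix.mul_nonsing_inv _ h0, Matrix.one_mul, add_neg_cancel, if_neg j.succ_ne_zero]

lemma blockToeplitz_mul_blockToeplitz_reciprocal (h0 : IsUnit (s 0).det) (n : ℕ) :
    blockToeplitz s n * blockToeplitz (reciprocal q s) n = 1 := by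
  rw [blockToeplitz_mul_blockToeplitz, ← blockToeplitz_single_zero n]
  exact blockToeplitz_congr fun m _ => sum_mul_reciprocal h0 m

lemma sum_reciprocal_mul (h0 : IsUnit (s 0).det) (m : ℕ) :
    ∑ l ∈ range (m + 1), reciprocal q s (m - l) * s l = if m = 0 then 1 else 0 := by
  have h := mul_eq_one_comm.mp (blockToeplitz_mul_blockToeplitz_reciprocal h0 m)
  rw [blockToeplitz_mul_blockToeplitz, ← blockToeplitz_single_zero m] at h
  exact blockToeplitz_apply_eq_of_eq h le_rfl

lemma sum_reciprocal_mul_succ (h0 : IsUnit (s 0).det) (p : ℕ) :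
    ∑ a ∈ range (p + 1), reciprocal q s (p - a) * s (a + 1) = -(reciprocal q s (p + 1) * s 0) := by
  have h := sum_reciprocal_mul h0 (p + 1)
  rw [sum_range_succ', if_neg p.succ_ne_zero] at h
  simp only [Nat.add_sub_add_right, Nat.sub_zero] at h
  exact eq_neg_of_add_eq_zero_left h

lemma sum_succ_mul_reciprocal (h0 : IsUnit (s 0).det) (k : ℕ) :
    ∑ b ∈ range (k + 1), s (b + 1) * reciprocal q s (k - b) = -(s 0 * reciprocal q s (k + 1)) := by
  have h := sum_mul_reciprocal h0 (k + 1)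
  rw [sum_range_succ_reflect_mul, sum_range_succ', if_neg k.succ_ne_zero] at h
  simp only [Nat.add_sub_add_right, Nat.sub_zero] at h
  exact eq_neg_of_add_eq_zero_left h

lemma conjTranspose_reciprocal (h0 : IsUnit (s 0).det) (hs : ∀ m, (s m)ᴴ = s m) (m : ℕ) :
    (reciprocal q s m)ᴴ = reciprocal q s m := by
  have hleft : blockToeplitz (fun m => (reciprocal q s m)ᴴ) m * blockToeplitz s m = 1 := by
    rw [blockToeplitz_mul_blockToeplitz, ← blockToeplitz_single_zero m]
    refine blockToeplitz_congr fun j _ => ?_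
    have h := congrArg Matrix.conjTranspose (sum_mul_reciprocal h0 j)
    simp only [Matrix.conjTranspose_sum, Matrix.conjTranspose_mul, hs] at h
    rw [sum_range_succ_reflect_mul (fun l => (reciprocal q s l)ᴴ), h]
    split_ifs <;> simp
  have h : blockToeplitz (fun m => (reciprocal q s m)ᴴ) m = blockToeplitz (reciprocal q s) m := by
    rw [← mul_one (blockToeplitz _ m), ← blockToeplitz_mul_blockToeplitz_reciprocal h0 m,
      ← mul_assoc, hleft, one_mul]
  exact blockToeplitz_apply_eq_of_eq h le_rfl

def reciprocalSandwich (s : ℕ → Mq q) (c p k : ℕ) : Mq q :=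
  ∑ a ∈ range (p + 1), ∑ b ∈ range (k + 1),
    reciprocal q s (p - a) * s (a + b + c) * reciprocal q s (k - b)

lemma reciprocalSandwich_one_zero (h0 : IsUnit (s 0).det) (p : ℕ) :
    reciprocalSandwich s 1 p 0 = -reciprocal q s (p + 1) := by
  simp only [reciprocalSandwich, zero_add, range_one, sum_singleton, add_zero, Nat.sub_self]
  rw [← sum_mul, sum_reciprocal_mul_succ h0, reciprocal, neg_mul,
    Matrix.mul_nonsing_inv_cancel_right _ _ h0]

lemma reciprocalSandwich_one_succ_right (h0 : IsUnit (s 0).det) (p k : ℕ) :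
    reciprocalSandwich s 1 p (k + 1) =
      reciprocalSandwich s 2 p k - reciprocal q s (p + 1) * s 0 * reciprocal q s (k + 1) := by
  simp only [reciprocalSandwich, sum_range_succ' _ (k + 1), sum_add_distrib, Nat.add_sub_add_right,
    add_zero, Nat.sub_zero, ← add_assoc]
  rw [← sum_mul, sum_reciprocal_mul_succ h0, neg_mul, sub_eq_add_neg]

lemma reciprocalSandwich_one_succ_left (h0 : IsUnit (s 0).det) (p k : ℕ) :
    reciprocalSandwich s 1 (p + 1) k =
      reciprocalSandwich s 2 p k - reciprocal q s (p + 1) * s 0 * reciprocal q s (k + 1) := by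
  rw [reciprocalSandwich, sum_range_succ']
  simp only [Nat.add_sub_add_right, Nat.sub_zero, zero_add, Matrix.mul_assoc,
    show ∀ a b : ℕ, a + 1 + b + 1 = a + b + 2 from fun a b => by omega]
  rw [← mul_sum, sum_succ_mul_reciprocal h0, mul_neg, sub_eq_add_neg, reciprocalSandwich]
  simp only [Matrix.mul_assoc]

lemma reciprocalSandwich_one (h0 : IsUnit (s 0).det) (p k : ℕ) :
    reciprocalSandwich s 1 p k = -reciprocal q s (p + k + 1) := by
  induction k generalizing p with
  | zero => exact reciprocalSandwich_one_zero h0 p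
  | succ k ih =>
    rw [reciprocalSandwich_one_succ_right h0, ← reciprocalSandwich_one_succ_left h0, ih,
      add_right_comm p 1 k, add_assoc p k 1]

lemma reciprocalSandwich_two (h0 : IsUnit (s 0).det) (p k : ℕ) :
    reciprocalSandwich s 2 p k =
      -reciprocal q s (p + k + 2) + reciprocal q s (p + 1) * s 0 * reciprocal q s (k + 1) := by
  rw [← sub_eq_iff_eq_add, ← reciprocalSandwich_one_succ_left h0, reciprocalSandwich_one h0,
    add_right_comm p 1 k]

def katetovFactor (s : ℕ → Mq q) (n : ℕ) : Matrix (Fin (n + 1) × Fin q) (Fin (n + 1) × Fin q) ℂ :=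
  blockToeplitz (fun m => s 0 * reciprocal q s m) n

def katetovFactorInv (s : ℕ → Mq q) (n : ℕ) :
    Matrix (Fin (n + 1) × Fin q) (Fin (n + 1) × Fin q) ℂ :=
  blockToeplitz (fun m => s m * (s 0)⁻¹) n

lemma katetovFactor_mul_katetovFactorInv (h0 : IsUnit (s 0).det) (n : ℕ) :
    katetovFactor s n * katetovFactorInv s n = 1 := by
  refine mul_eq_one_comm.mp ?_
  rw [katetovFactorInv, katetovFactor, blockToeplitz_mul_blockToeplitz,
    ← blockToeplitz_single_zero n]
  refine blockToeplitz_congr fun m _ => ?_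
  simp only [Matrix.mul_assoc, Matrix.nonsing_inv_mul_cancel_left _ _ h0]
  exact sum_mul_reciprocal h0 m

def schurComplementH (s : ℕ → Mq q) (n : ℕ) :
    Matrix (Fin (n + 1) × Fin q) (Fin (n + 1) × Fin q) ℂ :=
  blockMat (fun a b => s (a + b + 2) - s (a + 1) * (s 0)⁻¹ * s (b + 1)) n

lemma Hmat_katetov1 (h0 : IsUnit (s 0).det) (hs : ∀ m, (s m)ᴴ = s m) (n : ℕ) :
    Hmat q (katetov1 q s) n = katetovFactor s n * Kmat q s n * (katetovFactor s n)ᴴ := by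
  rw [show Kmat q s n = blockMat (fun a b => s (a + b + 1)) n from rfl, katetovFactor,
    blockToeplitz_mul_blockMat_mul_conjTranspose_blockToeplitz]
  refine blockMat_congr (W := fun j k => katetov1 q s (j + k)) fun j k _ _ => ?_
  simp only [Matrix.conjTranspose_mul, conjTranspose_reciprocal h0 hs, hs]
  calc katetov1 q s (j + k) = s 0 * reciprocalSandwich s 1 j k * s 0 := by
        rw [reciprocalSandwich_one h0, katetov1, neg_mul, mul_neg]
    _ = _ := by simp only [reciprocalSandwich, mul_sum, sum_mul, Matrix.mul_assoc]

lemma Kmat_katetov1 (h0 : IsUnit (s 0).det) (hs : ∀ m, (s m)ᴴ = s m) (n : ℕ) :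
    Kmat q (katetov1 q s) n =
      katetovFactor s n * schurComplementH s n * (katetovFactor s n)ᴴ := by
  rw [schurComplementH, katetovFactor, blockToeplitz_mul_blockMat_mul_conjTranspose_blockToeplitz]
  refine blockMat_congr (W := fun j k => katetov1 q s (j + k + 1)) fun j k _ _ => ?_
  simp only [Matrix.conjTranspose_mul, conjTranspose_reciprocal h0 hs, hs]
  calc katetov1 q s (j + k + 1) = s 0 * (reciprocalSandwich s 2 j k -
        (∑ a ∈ range (j + 1), reciprocal q s (j - a) * s (a + 1)) * (s 0)⁻¹ *
          ∑ b ∈ range (k + 1), s (b + 1) * reciprocal q s (k - b)) * s 0 := by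
        rw [sum_reciprocal_mul_succ h0, sum_succ_mul_reciprocal h0, reciprocalSandwich_two h0]
        simp only [neg_mul, mul_neg, neg_neg, Matrix.mul_nonsing_inv_cancel_right _ _ h0,
          ← Matrix.mul_assoc, add_sub_cancel_right, katetov1]
    _ = _ := by
        simp only [reciprocalSandwich, mul_sum, sum_mul, mul_sub, sub_mul, sum_sub_distrib,
          Matrix.mul_assoc]
        exact congrArg _ sum_comm

lemma ycol_katetov1 (h0 : IsUnit (s 0).det) (n : ℕ) :
    ycol q (katetov1 q s) n = katetovFactor s n * blockCol (fun m => s (m + 1)) n := by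
  rw [katetovFactor, blockToeplitz_mul_blockCol]
  refine blockCol_congr fun j _ => ?_
  simp only [Matrix.mul_assoc, ← mul_sum, sum_reciprocal_mul_succ h0, katetov1, neg_mul, mul_neg]

lemma vcol_eq_blockCol (n : ℕ) : vcol q n = blockCol (fun m => if m = 0 then 1 else 0) n := by
  ext ⟨j, a⟩ b
  simp only [vcol, blockCol, Matrix.of_apply]
  by_cases hj : (j : ℕ) = 0 <;> simp [hj, Matrix.one_apply]

lemma katetovFactorInv_mul_vcol (n : ℕ) :
    katetovFactorInv s n * vcol q n = ycol q s n * (s 0)⁻¹ := by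
  rw [vcol_eq_blockCol, katetovFactorInv, blockToeplitz_mul_blockCol_single_zero]
  rfl

lemma Hmat_zero (s : ℕ → Mq q) :
    Hmat q s 0 =
      (s 0).submatrix (Equiv.uniqueProd (Fin q) (Fin 1)) (Equiv.uniqueProd (Fin q) (Fin 1)) := by
  ext ⟨j, a⟩ ⟨k, b⟩
  simp [Hmat, Fin.fin_one_eq_zero j, Fin.fin_one_eq_zero k]

lemma Kmat_zero (s : ℕ → Mq q) :
    Kmat q s 0 =
      (s 1).submatrix (Equiv.uniqueProd (Fin q) (Fin 1)) (Equiv.uniqueProd (Fin q) (Fin 1)) := by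
  ext ⟨j, a⟩ ⟨k, b⟩
  simp [Kmat, Fin.fin_one_eq_zero j, Fin.fin_one_eq_zero k]

lemma IsStieltjesPD.conjTranspose_eq (hs : IsStieltjesPD q s) (m : ℕ) : (s m)ᴴ = s m := by
  ext a b
  simpa [Hmat, Matrix.conjTranspose_apply] using
    congrFun (congrFun (hs m).1.1 (⟨m, by omega⟩, a)) (0, b)

lemma IsStieltjesPD.posDef_zero (hs : IsStieltjesPD q s) : (s 0).PosDef := by
  have h := (hs 0).1.submatrix (Equiv.uniqueProd (Fin q) (Fin 1)).symm.injective
  rwa [Hmat_zero, Matrix.submatrix_submatrix, Equiv.self_comp_symm, Matrix.submatrix_id_id] at h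

lemma IsStieltjesPD.isUnit_det_zero (hs : IsStieltjesPD q s) : IsUnit (s 0).det :=
  (Matrix.isUnit_iff_isUnit_det _).mp hs.posDef_zero.isUnit

lemma Hmat_succ_submatrix (s : ℕ → Mq q) (n : ℕ) :
    (Hmat q s (n + 1)).submatrix (sumSuccProdEquiv _ n) (sumSuccProdEquiv _ n) =
      Matrix.fromBlocks (s 0) (blockRow (fun m => s (m + 1)) n) (blockCol (fun m => s (m + 1)) n)
        (blockMat (fun a b => s (a + b + 2)) n) := by
  ext (c | ⟨j, c⟩) (d | ⟨k, d⟩) <;>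
    simp [Hmat, sumSuccProdEquiv, blockRow, blockCol, blockMat, ← add_assoc, add_right_comm _ 1]

lemma schurComplementH_eq (s : ℕ → Mq q) (n : ℕ) :
    schurComplementH s n = blockMat (fun a b => s (a + b + 2)) n -
      blockCol (fun m => s (m + 1)) n * (s 0)⁻¹ * blockRow (fun m => s (m + 1)) n := by
  rw [blockCol_mul, blockCol_mul_blockRow]
  rfl

lemma IsStieltjesPD.posDef_schurComplementH (hs : IsStieltjesPD q s) (n : ℕ) :
    (schurComplementH s n).PosDef := by
  let _ : Invertible (s 0) := Matrix.invertibleOfIsUnitDet _ hs.isUnit_det_zero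
  have hF := (hs (n + 1)).1.submatrix (sumSuccProdEquiv (Fin q) n).injective
  rw [Hmat_succ_submatrix] at hF
  have hrow : (blockRow (fun m => s (m + 1)) n)ᴴ = blockCol (fun m => s (m + 1)) n := by
    simp only [conjTranspose_blockRow, hs.conjTranspose_eq]
  have hpsd := (Matrix.PosDef.fromBlocks₁₁ _ _ hs.posDef_zero).mp (hrow ▸ hF.posSemidef)
  rw [hrow, ← schurComplementH_eq] at hpsd
  refine hpsd.posDef_iff_det_ne_zero.mpr fun hdet => ?_
  have hdetF := Matrix.det_fromBlocks₁₁ (s 0) (blockRow (fun m => s (m + 1)) n)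
    (blockCol (fun m => s (m + 1)) n) (blockMat (fun a b => s (a + b + 2)) n)
  rw [Matrix.invOf_eq_nonsing_inv, ← schurComplementH_eq, hdet, mul_zero] at hdetF
  exact not_isUnit_zero (hdetF ▸ (Matrix.isUnit_iff_isUnit_det _).mp hF.isUnit)

lemma IsStieltjesPD.katetov1 (hs : IsStieltjesPD q s) : IsStieltjesPD q (katetov1 q s) := by
  intro n
  have h0 := hs.isUnit_det_zero
  have hA := IsUnit.of_mul_eq_one _ (katetovFactor_mul_katetovFactorInv h0 n)
  rw [Hmat_katetov1 h0 hs.conjTranspose_eq, Kmat_katetov1 h0 hs.conjTranspose_eq]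
  exact ⟨(Matrix.IsUnit.posDef_star_right_conjugate_iff hA).mpr (hs n).2,
    (Matrix.IsUnit.posDef_star_right_conjugate_iff hA).mpr (hs.posDef_schurComplementH n)⟩

lemma katetov_succ (ℓ : ℕ) (s : ℕ → Mq q) :
    katetov q (ℓ + 1) s = katetov1 q (katetov q ℓ s) :=
  Function.iterate_succ_apply' _ _ _

lemma IsStieltjesPD.katetov (hs : IsStieltjesPD q s) (ℓ : ℕ) :
    IsStieltjesPD q (katetov q ℓ s) := by
  induction ℓ with
  | zero => exact hs
  | succ ℓ ih => exact katetov_succ ℓ s ▸ ih.katetov1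

def sumDSM (s : ℕ → Mq q) (k : ℕ) : Mq q := (vcol q k)ᴴ * (Hmat q s k)⁻¹ * vcol q k

def sumDSL (s : ℕ → Mq q) (k : ℕ) : Mq q := (ycol q s k)ᴴ * (Kmat q s k)⁻¹ * ycol q s k

lemma DSM_succ (s : ℕ → Mq q) (k : ℕ) : DSM q s (k + 1) = sumDSM s (k + 1) - sumDSM s k := rfl

lemma DSL_succ (s : ℕ → Mq q) (k : ℕ) : DSL q s (k + 1) = sumDSL s (k + 1) - sumDSL s k := rfl

lemma conjTranspose_vcol_mul_mul_vcol (n : ℕ)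
    (X : Matrix (Fin (n + 1) × Fin q) (Fin (n + 1) × Fin q) ℂ) :
    (vcol q n)ᴴ * X * vcol q n = X.submatrix (Prod.mk 0) (Prod.mk 0) := by
  have hv : vcol q n = (1 : Matrix _ _ ℂ).submatrix (Equiv.refl _) (Prod.mk (0 : Fin (n + 1))) := by
    ext ⟨j, a⟩ b
    simp only [vcol, Matrix.of_apply, Matrix.submatrix_apply, Matrix.one_apply, Prod.mk.injEq,
      Equiv.refl_apply, Fin.ext_iff, Fin.val_zero]
  rw [hv, Matrix.conjTranspose_submatrix, Matrix.conjTranspose_one, Matrix.mul_submatrix_one,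
    Matrix.one_submatrix_mul]
  rfl

lemma DSM_zero_eq_sumDSM (s : ℕ → Mq q) : DSM q s 0 = sumDSM s 0 := by
  rw [DSM, sumDSM, conjTranspose_vcol_mul_mul_vcol, Hmat_zero, Matrix.inv_submatrix_equiv]
  rfl

lemma DSL_zero_eq_sumDSL (h : (s 0)ᴴ = s 0) : DSL q s 0 = sumDSL s 0 := by
  have hy : ycol q s 0 = (s 0).submatrix (Equiv.uniqueProd (Fin q) (Fin 1)) id := by
    ext ⟨j, a⟩ b
    simp [ycol, Fin.fin_one_eq_zero j]
  rw [DSL, sumDSL, hy, Kmat_zero, Matrix.inv_submatrix_equiv, Matrix.conjTranspose_submatrix,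
    Matrix.submatrix_mul_equiv, Matrix.submatrix_mul_equiv, Matrix.submatrix_id_id, h]

lemma sumDSL_eq_sumDSM_katetov1 (hs : IsStieltjesPD q s) (k : ℕ) :
    sumDSL s k = s 0 * sumDSM (katetov1 q s) k * s 0 := by
  have h0 := hs.isUnit_det_zero
  rw [sumDSM, Hmat_katetov1 h0 hs.conjTranspose_eq,
    Matrix.inv_mul_mul_conjTranspose (katetovFactor_mul_katetovFactorInv h0 k)]
  calc sumDSL s k
      = s 0 * ((ycol q s k * (s 0)⁻¹)ᴴ * (Kmat q s k)⁻¹ * (ycol q s k * (s 0)⁻¹)) * s 0 := by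
        rw [Matrix.conjTranspose_mul, Matrix.conjTranspose_nonsing_inv, hs.conjTranspose_eq 0]
        simp only [sumDSL, Matrix.mul_assoc, Matrix.nonsing_inv_mul _ h0, Matrix.mul_one,
          Matrix.mul_nonsing_inv_cancel_left _ _ h0]
    _ = _ := by
        rw [← katetovFactorInv_mul_vcol]
        simp only [Matrix.conjTranspose_mul, Matrix.mul_assoc]

lemma sumDSM_succ (hs : IsStieltjesPD q s) (n : ℕ) :
    sumDSM s (n + 1) = (s 0)⁻¹ + (s 0)⁻¹ * (blockRow (fun m => s (m + 1)) n *
      (schurComplementH s n)⁻¹ * blockCol (fun m => s (m + 1)) n) * (s 0)⁻¹ := by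
  let _ : Invertible (s 0) := Matrix.invertibleOfIsUnitDet _ hs.isUnit_det_zero
  set B := blockRow (fun m => s (m + 1)) n
  set C := blockCol (fun m => s (m + 1)) n
  set D := blockMat (fun a b => s (a + b + 2)) n
  have hS : D - C * (s 0)⁻¹ * B = schurComplementH s n := (schurComplementH_eq s n).symm
  let _ : Invertible (D - C * ⅟(s 0) * B) := by
    rw [Matrix.invOf_eq_nonsing_inv, hS]
    exact Matrix.invertibleOfIsUnitDet _
      ((Matrix.isUnit_iff_isUnit_det _).mp (hs.posDef_schurComplementH n).isUnit)
  let _ := Matrix.fromBlocks₁₁Invertible (s 0) B C D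
  have hH : Hmat q s (n + 1) = (Matrix.fromBlocks (s 0) B C D).submatrix
      (sumSuccProdEquiv _ n).symm (sumSuccProdEquiv _ n).symm := by
    rw [← Hmat_succ_submatrix, Matrix.submatrix_submatrix, Equiv.self_comp_symm,
      Matrix.submatrix_id_id]
  rw [sumDSM, hH, Matrix.inv_submatrix_equiv, conjTranspose_vcol_mul_mul_vcol,
    Matrix.submatrix_submatrix, ← Matrix.invOf_eq_nonsing_inv, Matrix.invOf_fromBlocks₁₁_eq]
  simp only [Matrix.invOf_eq_nonsing_inv, hS]
  ext a b
  simp [sumSuccProdEquiv, Matrix.mul_assoc]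

lemma sumDSL_katetov1 (hs : IsStieltjesPD q s) (k : ℕ) :
    sumDSL (katetov1 q s) k = blockRow (fun m => s (m + 1)) k *
      (schurComplementH s k)⁻¹ * blockCol (fun m => s (m + 1)) k := by
  have h0 := hs.isUnit_det_zero
  have hAB := katetovFactor_mul_katetovFactorInv h0 k
  have hBA := mul_eq_one_comm.mp hAB
  have hBA' : (katetovFactor s k)ᴴ * (katetovFactorInv s k)ᴴ = 1 := by
    rw [← Matrix.conjTranspose_mul, hBA, Matrix.conjTranspose_one]
  rw [sumDSL, ycol_katetov1 h0, Kmat_katetov1 h0 hs.conjTranspose_eq,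
    Matrix.inv_mul_mul_conjTranspose hAB, Matrix.conjTranspose_mul, conjTranspose_blockCol]
  simp only [hs.conjTranspose_eq]
  calc _ = blockRow (fun m => s (m + 1)) k * ((katetovFactor s k)ᴴ * (katetovFactorInv s k)ᴴ) *
        (schurComplementH s k)⁻¹ * (katetovFactorInv s k * katetovFactor s k) *
          blockCol (fun m => s (m + 1)) k := by simp only [Matrix.mul_assoc]
    _ = _ := by rw [hBA, hBA', Matrix.mul_one, Matrix.mul_one]

lemma conj_sumDSM_succ (hs : IsStieltjesPD q s) (k : ℕ) :
    s 0 * sumDSM s (k + 1) * s 0 = s 0 + sumDSL (katetov1 q s) k := by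
  have h0 := hs.isUnit_det_zero
  rw [sumDSM_succ hs, sumDSL_katetov1 hs, mul_add, add_mul, Matrix.mul_nonsing_inv _ h0,
    Matrix.one_mul]
  simp only [Matrix.mul_assoc, Matrix.nonsing_inv_mul _ h0, Matrix.mul_one,
    Matrix.mul_nonsing_inv_cancel_left _ _ h0]

lemma DSL_eq_conj_DSM_katetov1 (hs : IsStieltjesPD q s) (k : ℕ) :
    DSL q s k = s 0 * DSM q (katetov1 q s) k * s 0 := by
  cases k with
  | zero =>
    rw [DSL_zero_eq_sumDSL (hs.conjTranspose_eq 0), DSM_zero_eq_sumDSM,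
      sumDSL_eq_sumDSM_katetov1 hs]
  | succ k =>
    rw [DSL_succ, DSM_succ, mul_sub, sub_mul, sumDSL_eq_sumDSM_katetov1 hs,
      sumDSL_eq_sumDSM_katetov1 hs]

lemma DSL_katetov1_eq_conj_DSM (hs : IsStieltjesPD q s) (k : ℕ) :
    DSL q (katetov1 q s) k = s 0 * DSM q s (k + 1) * s 0 := by
  rw [DSM_succ, mul_sub, sub_mul, conj_sumDSM_succ hs]
  cases k with
  | zero =>
    rw [DSL_zero_eq_sumDSL (hs.katetov1.conjTranspose_eq 0), ← DSM_zero_eq_sumDSM, DSM,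
      Matrix.mul_nonsing_inv _ hs.isUnit_det_zero, Matrix.one_mul, add_sub_cancel_left]
  | succ k =>
    rw [DSL_succ, conj_sumDSM_succ hs, add_sub_add_left_eq_sub]

/-- Runs through `𝕄_0, 𝕃_0, 𝕄_1, 𝕃_1, …`, so that `𝐐_0` intertwines the `j`-th factor of the
Kátětov transform with the `(j + 1)`-st factor of the sequence itself. -/
def DSfactor (s : ℕ → Mq q) (j : ℕ) (z : ℂ) : M2q q :=
  if Even j then MM q s (j / 2) z else LL q s (j / 2)

lemma DSfactor_two_mul (s : ℕ → Mq q) (k : ℕ) (z : ℂ) : DSfactor s (2 * k) z = MM q s k z := by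
  simp [DSfactor]

lemma DSfactor_two_mul_add_one (s : ℕ → Mq q) (k : ℕ) (z : ℂ) :
    DSfactor s (2 * k + 1) z = LL q s k := by
  rw [DSfactor, if_neg (Nat.not_even_two_mul_add_one k), show (2 * k + 1) / 2 = k by omega]

lemma semiconjBy_QQ0_DSfactor (hs : IsStieltjesPD q s) (ℓ j : ℕ) (z : ℂ) :
    SemiconjBy (QQ0 q s ℓ z) (DSfactor (katetov q (ℓ + 1) s) j z)
      (DSfactor (katetov q ℓ s) (j + 1) z) := by
  have hu := hs.katetov ℓ
  rw [katetov_succ]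
  obtain ⟨k, rfl | rfl⟩ := Nat.even_or_odd' j
  · rw [DSfactor_two_mul, DSfactor_two_mul_add_one]
    exact semiconjBy_fromBlocks_lower hu.isUnit_det_zero (DSL_eq_conj_DSM_katetov1 hu k) z
  · rw [DSfactor_two_mul_add_one, show 2 * k + 1 + 1 = 2 * (k + 1) by ring, DSfactor_two_mul]
    exact semiconjBy_fromBlocks_upper hu.isUnit_det_zero (DSL_katetov1_eq_conj_DSM hu k) z

lemma semiconjBy_Qprod (hs : IsStieltjesPD q s) (m j : ℕ) (z : ℂ) :
    SemiconjBy (Qprod q s m z) (DSfactor (katetov q (m + 1) s) j z) (DSfactor s (j + m + 1) z) := by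
  induction m generalizing j with
  | zero =>
    rw [Qprod, oprod_zero]
    exact semiconjBy_QQ0_DSfactor hs 0 j z
  | succ m ih =>
    rw [Qprod, oprod_succ, show j + (m + 1) + 1 = j + 1 + m + 1 by ring]
    exact (ih (j + 1)).mul_left (semiconjBy_QQ0_DSfactor hs (m + 1) j z)

end

theorem stmt10_general (q : ℕ) (s : ℕ → Mq q) (hs : IsStieltjesPD q s) (k n : ℕ) (z : ℂ) :
    Qprod q s (2 * n) z * LL q (katetov q (2 * n + 1) s) k =
        MM q s (k + n + 1) z * Qprod q s (2 * n) z ∧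
      Qprod q s (2 * n) z * MM q (katetov q (2 * n + 1) s) k z =
        LL q s (k + n) * Qprod q s (2 * n) z ∧
      Qprod q s (2 * n + 1) z * LL q (katetov q (2 * n + 2) s) k =
        LL q s (k + n + 1) * Qprod q s (2 * n + 1) z ∧
      Qprod q s (2 * n + 1) z * MM q (katetov q (2 * n + 2) s) k z =
        MM q s (k + n + 1) z * Qprod q s (2 * n + 1) z := by
  have h₁ := semiconjBy_Qprod hs (2 * n) (2 * k + 1) z
  have h₂ := semiconjBy_Qprod hs (2 * n) (2 * k) z
  have h₃ := semiconjBy_Qprod hs (2 * n + 1) (2 * k + 1) z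
  have h₄ := semiconjBy_Qprod hs (2 * n + 1) (2 * k) z
  rw [DSfactor_two_mul_add_one, show 2 * k + 1 + 2 * n + 1 = 2 * (k + n + 1) by ring,
    DSfactor_two_mul] at h₁
  rw [DSfactor_two_mul, show 2 * k + 2 * n + 1 = 2 * (k + n) + 1 by ring,
    DSfactor_two_mul_add_one] at h₂
  rw [DSfactor_two_mul_add_one, show 2 * k + 1 + (2 * n + 1) + 1 = 2 * (k + n + 1) + 1 by ring,
    DSfactor_two_mul_add_one] at h₃
  rw [DSfactor_two_mul, show 2 * k + (2 * n + 1) + 1 = 2 * (k + n + 1) by ring,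
    DSfactor_two_mul] at h₄
  exact ⟨h₁, h₂, h₃, h₄⟩

/-- Intertwining relations for the products `𝒬_m`. -/
theorem stmt10 (q : ℕ) (hq : 1 ≤ q) (s : ℕ → Mq q) (hs : IsStieltjesPD q s) (k n : ℕ) (z : ℂ) :
    Qprod q s (2 * n) z * LL q (katetov q (2 * n + 1) s) k =
        MM q s (k + n + 1) z * Qprod q s (2 * n) z ∧
      Qprod q s (2 * n) z * MM q (katetov q (2 * n + 1) s) k z =
        LL q s (k + n) * Qprod q s (2 * n) z ∧
      Qprod q s (2 * n + 1) z * LL q (katetov q (2 * n + 2) s) k =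
        LL q s (k + n + 1) * Qprod q s (2 * n + 1) z ∧
      Qprod q s (2 * n + 1) z * MM q (katetov q (2 * n + 2) s) k z =
        MM q s (k + n + 1) z * Qprod q s (2 * n + 1) z :=
  stmt10_general q s hs k n z
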